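/- arXiv:2103.00941 — 2 statements merged into one kernel-verified Lean document; each statement's English description precedes it below -/
import Mathlib

section
/- Consider a graph containing an edge (x,y) with d(x) = d(y) = 3 such that (x,y) lies in a triangle, i.e. there exists z adjacent to both x and y. Then W(μ_x^{1/4}, μ_y^{1/4}) < 1, so k_{1/4}(x,y) > 0. -/
/-!
With `α = 1/4` and degree `3`, the measures `μ_x` and `μ_y` are uniform on the closed
neighbourhoods `{x, y, z, a}` and `{x, y, z, b}`. Leaving the common mass on `x, y, z` in place
and moving the mass `1/4` from `a` to `b` along the path `a - x - y - b` is a coupling of cost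
at most `3/4`.
-/

open scoped BigOperators

namespace RicciFlatPaper

variable {V : Type*}

/-- Degree of a vertex (as the number of neighbors). -/
noncomputable def deg (G : SimpleGraph V) (v : V) : ℕ := (G.neighborSet v).ncard

/-- A graph is locally finite if every vertex has finitely many neighbors. -/
def LocFin (G : SimpleGraph V) : Prop := ∀ v : V, (G.neighborSet v).Finite

/-- A finitely supported probability distribution on the vertex set. -/
def IsProbDist (μ : V → ℝ) : Prop :=
  (∀ v, 0 ≤ μ v) ∧ (Function.support μ).Finite ∧ ∑ᶠ v, μ v = 1

/-- A (finitely supported) coupling between two distributions. -/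
def IsCoupling (μ₁ μ₂ : V → ℝ) (A : V → V → ℝ) : Prop :=
  (∀ x y, 0 ≤ A x y) ∧ (Function.support fun p : V × V => A p.1 p.2).Finite ∧
  (∀ x, ∑ᶠ y, A x y = μ₁ x) ∧ (∀ y, ∑ᶠ x, A x y = μ₂ y)

/-- Transportation cost of a coupling with respect to the graph distance. -/
noncomputable def cost (G : SimpleGraph V) (A : V → V → ℝ) : ℝ :=
  ∑ᶠ p : V × V, A p.1 p.2 * (G.dist p.1 p.2 : ℝ)

/-- The transportation (Wasserstein) distance between two distributions. -/
noncomputable def W (G : SimpleGraph V) (μ₁ μ₂ : V → ℝ) : ℝ :=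
  sInf {c : ℝ | ∃ A : V → V → ℝ, IsCoupling μ₁ μ₂ A ∧ c = cost G A}

open Classical in
/-- The lazy neighborhood measure `μ_x^α`. -/
noncomputable def mu (G : SimpleGraph V) (α : ℝ) (x : V) : V → ℝ :=
  fun z => if z = x then α else if G.Adj x z then (1 - α) / (deg G x : ℝ) else 0

/-- The `α`-Ollivier–Ricci curvature `k_α(x,y) = 1 - W(μ_x^α, μ_y^α)`. -/
noncomputable def kIdle (G : SimpleGraph V) (α : ℝ) (x y : V) : ℝ :=
  1 - W G (mu G α x) (mu G α y)

/-- `HasRicci G x y k` means the Lin–Lu–Yau curvature `k(x,y) = lim_{α→1} k_α(x,y)/(1-α)`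
exists and equals `k`. -/
def HasRicci (G : SimpleGraph V) (x y : V) (k : ℝ) : Prop :=
  Filter.Tendsto (fun α : ℝ => kIdle G α x y / (1 - α))
    (nhdsWithin (1 : ℝ) (Set.Iio (1 : ℝ))) (nhds k)

/-- A graph is Ricci-flat if the Lin–Lu–Yau curvature vanishes on every edge. -/
def RicciFlat (G : SimpleGraph V) : Prop := ∀ x y : V, G.Adj x y → HasRicci G x y 0

/-- `f` is 1-Lipschitz with respect to the graph distance. -/
def Lip1 (G : SimpleGraph V) (f : V → ℝ) : Prop :=
  ∀ u v : V, f u - f v ≤ (G.dist u v : ℝ)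

/-- The edge `(x,y)` is contained in some cycle of length `n`. -/
def EdgeInCycle (G : SimpleGraph V) (n : ℕ) (x y : V) : Prop :=
  ∃ (u : V) (w : G.Walk u u), w.IsCycle ∧ w.length = n ∧ s(x, y) ∈ w.edges

end RicciFlatPaper

theorem Set.exists_eq_insert_pair_of_ncard_eq_three {α : Type*} {s : Set α} (hs : s.ncard = 3)
    {y z : α} (hy : y ∈ s) (hz : z ∈ s) (hyz : y ≠ z) :
    ∃ a ∉ ({y, z} : Set α), s = {y, z, a} := by
  have hfin : s.Finite := Set.finite_of_ncard_ne_zero (by omega)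
  have hpair : ({y, z} : Set α).ncard = 2 := Set.ncard_pair hyz
  obtain ⟨a, has, ha⟩ : ∃ a ∈ s, a ∉ ({y, z} : Set α) :=
    Set.not_subset.mp fun h => by have := Set.ncard_le_ncard h; omega
  obtain ⟨hay, haz⟩ : a ≠ y ∧ a ≠ z := by simpa using ha
  refine ⟨a, ha, (Set.eq_of_subset_of_ncard_le ?_ ?_ hfin).symm⟩
  · simp [Set.insert_subset_iff, hy, hz, has]
  · rw [hs, Set.ncard_insert_of_notMem (by simp [hyz, hay.symm]), Set.ncard_pair haz.symm]

theorem Set.indicator_insert_eq_add_single {α M : Type*} [DecidableEq α] [AddZeroClass M]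
    {s : Set α} {a : α} (ha : a ∉ s) (f : α → M) :
    (insert a s).indicator f = s.indicator f + Pi.single a (f a) := by
  rw [← Set.union_singleton, Set.indicator_union_of_disjoint (Set.disjoint_singleton_right.mpr ha),
    Set.indicator_singleton]
  rfl

namespace RicciFlatPaper

variable {V : Type*}

section

variable {G : SimpleGraph V} {μ₁ μ₂ ν₁ ν₂ : V → ℝ} {A B : V → V → ℝ}

lemma cost_nonneg (hA : ∀ u v, 0 ≤ A u v) : 0 ≤ cost G A :=
  finsum_nonneg fun _ => mul_nonneg (hA _ _) (Nat.cast_nonneg _)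

lemma W_le_cost (hA : IsCoupling μ₁ μ₂ A) : W G μ₁ μ₂ ≤ cost G A :=
  csInf_le ⟨0, by rintro _ ⟨B, hB, rfl⟩; exact cost_nonneg hB.1⟩ ⟨A, hA, rfl⟩

lemma finite_support_row (hA : (Function.support fun p : V × V => A p.1 p.2).Finite) (u : V) :
    (Function.support (A u)).Finite :=
  (hA.image Prod.snd).subset fun v hv => ⟨(u, v), hv, rfl⟩

lemma finite_support_col (hA : (Function.support fun p : V × V => A p.1 p.2).Finite) (v : V) :
    (Function.support fun u => A u v).Finite :=
  (hA.image Prod.fst).subset fun u hu => ⟨(u, v), hu, rfl⟩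

lemma IsCoupling.add (hA : IsCoupling μ₁ μ₂ A) (hB : IsCoupling ν₁ ν₂ B) :
    IsCoupling (μ₁ + ν₁) (μ₂ + ν₂) (A + B) := by
  obtain ⟨hA0, hAf, hA1, hA2⟩ := hA
  obtain ⟨hB0, hBf, hB1, hB2⟩ := hB
  refine ⟨fun u v => add_nonneg (hA0 u v) (hB0 u v),
    (hAf.union hBf).subset (Function.support_add _ _), fun u => ?_, fun v => ?_⟩
  · simp only [Pi.add_apply]
    rw [finsum_add_distrib (finite_support_row hAf u) (finite_support_row hBf u), hA1, hB1]
  · simp only [Pi.add_apply]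
    rw [finsum_add_distrib (finite_support_col hAf v) (finite_support_col hBf v), hA2, hB2]

lemma cost_add (hA : (Function.support fun p : V × V => A p.1 p.2).Finite)
    (hB : (Function.support fun p : V × V => B p.1 p.2).Finite) :
    cost G (A + B) = cost G A + cost G B := by
  simp only [cost, Pi.add_apply, add_mul]
  exact finsum_add_distrib (hA.subset (Function.support_mul_subset_left _ _))
    (hB.subset (Function.support_mul_subset_left _ _))

section

variable [DecidableEq V]

def diagCoupling (ν : V → ℝ) (u v : V) : ℝ := if u = v then ν u else 0

def pointCoupling (a b : V) (c : ℝ) (u v : V) : ℝ := if u = a ∧ v = b then c else 0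

lemma isCoupling_diag {ν : V → ℝ} (hν : ∀ v, 0 ≤ ν v) (hνf : (Function.support ν).Finite) :
    IsCoupling ν ν (diagCoupling ν) := by
  simp only [IsCoupling, diagCoupling]
  refine ⟨fun u v => ?_, ?_, fun u => ?_, fun v => ?_⟩
  · split_ifs
    exacts [hν u, le_rfl]
  · refine (hνf.image fun u => (u, u)).subset fun ⟨u, v⟩ hp => ?_
    by_cases h : u = v
    · subst h; exact ⟨u, by simpa using hp, rfl⟩
    · simp [h] at hp
  · rw [finsum_eq_single _ u fun v hv => if_neg (Ne.symm hv), if_pos rfl]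
  · rw [finsum_eq_single _ v fun u hu => if_neg hu, if_pos rfl]

lemma cost_diag (ν : V → ℝ) : cost G (diagCoupling ν) = 0 :=
  finsum_eq_zero_of_forall_eq_zero fun ⟨u, v⟩ => by
    by_cases h : u = v <;> simp [diagCoupling, h]

lemma isCoupling_point (a b : V) {c : ℝ} (hc : 0 ≤ c) :
    IsCoupling (Pi.single a c) (Pi.single b c) (pointCoupling a b c) := by
  simp only [IsCoupling, pointCoupling]
  refine ⟨fun u v => ?_, (Set.finite_singleton (a, b)).subset fun ⟨u, v⟩ hp => ?_,
    fun u => ?_, fun v => ?_⟩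
  · split_ifs
    exacts [hc, le_rfl]
  · by_contra h
    simp_all
  · rw [finsum_eq_single _ b fun v hv => if_neg fun h => hv h.2]
    by_cases h : u = a <;> simp [h]
  · rw [finsum_eq_single _ a fun u hu => if_neg fun h => hu h.1]
    by_cases h : v = b <;> simp [h]

lemma cost_point (a b : V) (c : ℝ) : cost G (pointCoupling a b c) = c * G.dist a b := by
  rw [cost, finsum_eq_single _ (a, b) fun p hp => ?_]
  · simp [pointCoupling]
  · have : ¬(p.1 = a ∧ p.2 = b) := fun h => hp (Prod.ext h.1 h.2)
    simp [pointCoupling, this]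

lemma W_add_single_le {ν : V → ℝ} (hν : ∀ v, 0 ≤ ν v) (hνf : (Function.support ν).Finite)
    (a b : V) {c : ℝ} (hc : 0 ≤ c) :
    W G (ν + Pi.single a c) (ν + Pi.single b c) ≤ c * G.dist a b := by
  have hdiag := isCoupling_diag hν hνf
  have hpoint := isCoupling_point a b hc
  calc W G (ν + Pi.single a c) (ν + Pi.single b c)
      ≤ cost G (diagCoupling ν + pointCoupling a b c) := W_le_cost (hdiag.add hpoint)
    _ = c * G.dist a b := by
      rw [cost_add hdiag.2.1 hpoint.2.1, cost_diag, cost_point, zero_add]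

end

lemma mu_eq_indicator {α : ℝ} {x : V} (h : (1 - α) / deg G x = α) :
    mu G α x = (insert x (G.neighborSet x)).indicator fun _ => α := by
  funext v
  by_cases hv : v = x
  · simp [mu, hv]
  · by_cases hadj : G.Adj x v <;> simp [mu, hv, hadj, h]

lemma exists_mu_quarter_eq_add_single [DecidableEq V] {x y z : V} (hd : deg G x = 3)
    (hy : G.Adj x y) (hz : G.Adj x z) (hyz : y ≠ z) :
    ∃ a, G.Adj x a ∧
      mu G (1/4) x = ({x, y, z} : Set V).indicator (fun _ => 1/4) + Pi.single a (1/4) := by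
  obtain ⟨a, ha, hN⟩ := Set.exists_eq_insert_pair_of_ncard_eq_three hd hy hz hyz
  have hxa : G.Adj x a := show a ∈ G.neighborSet x by simp [hN]
  have ha' : a ∉ ({x, y, z} : Set V) := by simpa [hxa.ne'] using ha
  refine ⟨a, hxa, ?_⟩
  rw [mu_eq_indicator (by rw [hd]; norm_num), hN, ← Set.indicator_insert_eq_add_single ha']
  congr 1
  ext v
  simp only [Set.mem_insert_iff, Set.mem_singleton_iff]
  tauto

end

theorem W_lt_one_deg33_triangle_general (G : SimpleGraph V)
    (x y z : V) (hxy : G.Adj x y) (hdx : deg G x = 3) (hdy : deg G y = 3)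
    (hxz : G.Adj x z) (hyz : G.Adj y z) :
    W G (mu G (1/4) x) (mu G (1/4) y) < 1 ∧ 0 < kIdle G (1/4) x y := by
  classical
  obtain ⟨a, hxa, hμx⟩ := exists_mu_quarter_eq_add_single hdx hxy hxz hyz.ne
  obtain ⟨b, hyb, hμy⟩ := exists_mu_quarter_eq_add_single hdy hxy.symm hyz hxz.ne
  rw [Set.insert_comm y x] at hμy
  have hab : G.dist a b ≤ 3 :=
    SimpleGraph.dist_le (.cons hxa.symm (.cons hxy (.cons hyb .nil)))
  have hW : W G (mu G (1/4) x) (mu G (1/4) y) ≤ 1/4 * G.dist a b := by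
    rw [hμx, hμy]
    exact W_add_single_le (Set.indicator_nonneg fun _ _ => by norm_num)
      ((Set.toFinite _).subset Set.support_indicator_subset) a b (by norm_num)
  have hW_lt : W G (mu G (1/4) x) (mu G (1/4) y) < 1 := by
    have : (G.dist a b : ℝ) ≤ 3 := by exact_mod_cast hab
    linarith
  exact ⟨hW_lt, by rw [kIdle]; linarith⟩

/-- an edge with both endpoints of degree 3 lying in a triangle has
`W(μ_x^{1/4}, μ_y^{1/4}) < 1`, so `k_{1/4}(x,y) > 0`. -/
theorem W_lt_one_deg33_triangle (G : SimpleGraph V) (hG : G.Connected)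
    (x y z : V) (hxy : G.Adj x y) (hdx : deg G x = 3) (hdy : deg G y = 3)
    (hxz : G.Adj x z) (hyz : G.Adj y z) :
    W G (mu G (1/4) x) (mu G (1/4) y) < 1 ∧ 0 < kIdle G (1/4) x y :=
  W_lt_one_deg33_triangle_general G x y z hxy hdx hdy hxz hyz

end RicciFlatPaper
end

section
/- In a Ricci-flat graph with maximum degree at most 4, suppose (x,y) is an edge with d(x) = d(y) = 4 contained in a triangle x–y–z–x. Then (x,y) is not contained in a second triangle, and (x,y) is not contained in any 4-cycle. -/
open scoped BigOperators

namespace RicciFlatPaper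
variable {V : Type*}
open Classical Function

/-- coupling built from a list of atoms -/
noncomputable def cpl (L : List ((V × V) × ℝ)) : V → V → ℝ :=
  fun u v => (L.map (fun t => if t.1 = (u, v) then t.2 else 0)).sum

lemma cpl_nil (u v : V) : cpl ([] : List ((V × V) × ℝ)) u v = 0 := rfl

lemma cpl_cons (t : (V × V) × ℝ) (L : List ((V × V) × ℝ)) (u v : V) :
    cpl (t :: L) u v = (if t.1 = (u, v) then t.2 else 0) + cpl L u v := by
  simp [cpl]

lemma cpl_support_finite (L : List ((V × V) × ℝ)) :
    (Function.support fun p : V × V => cpl L p.1 p.2).Finite := by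
  induction L with
  | nil => simp [cpl]
  | cons t L ih =>
    refine Set.Finite.subset (ih.union (Set.finite_singleton t.1)) ?_
    intro p hp
    simp only [Function.mem_support, cpl_cons] at hp
    by_cases h : t.1 = (p.1, p.2)
    · right; simpa using h.symm
    · left; simpa using fun hc => hp (by simp [h, hc])

lemma cpl_row_support_finite (L : List ((V × V) × ℝ)) (u : V) :
    (Function.support fun v : V => cpl L u v).Finite := by
  have := (cpl_support_finite L).image Prod.snd
  refine Set.Finite.subset this ?_
  intro v hv
  exact ⟨(u, v), hv, rfl⟩

lemma cpl_col_support_finite (L : List ((V × V) × ℝ)) (v : V) :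
    (Function.support fun u : V => cpl L u v).Finite := by
  have := (cpl_support_finite L).image Prod.fst
  refine Set.Finite.subset this ?_
  intro u hu
  exact ⟨(u, v), hu, rfl⟩

lemma finsum_ite_pair (u : V) (p : V × V) (w : ℝ) :
    (∑ᶠ v, if p = (u, v) then w else 0) = if p.1 = u then w else 0 := by
  obtain ⟨p1, p2⟩ := p
  by_cases h : p1 = u
  · subst h
    rw [finsum_eq_single _ p2 (fun v hv => if_neg (by simp [hv.symm]))]
    simp
  · have : (fun v => if (p1, p2) = (u, v) then w else 0) = fun _ => 0 := by
      funext v; exact if_neg (by simp [h])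
    rw [this, finsum_zero]
    simp [h]

lemma finsum_ite_pair' (v : V) (p : V × V) (w : ℝ) :
    (∑ᶠ u, if p = (u, v) then w else 0) = if p.2 = v then w else 0 := by
  obtain ⟨p1, p2⟩ := p
  by_cases h : p2 = v
  · subst h
    rw [finsum_eq_single _ p1 (fun u hu => if_neg (by simp [hu.symm]))]
    simp
  · have : (fun u => if (p1, p2) = (u, v) then w else 0) = fun _ => 0 := by
      funext u; exact if_neg (by simp [h])
    rw [this, finsum_zero]
    simp [h]

lemma cpl_row (L : List ((V × V) × ℝ)) (u : V) :
    (∑ᶠ v, cpl L u v) = (L.map fun t => if t.1.1 = u then t.2 else 0).sum := by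
  induction L with
  | nil => simp [cpl_nil]
  | cons t L ih =>
    have h1 : (Function.support fun v => if t.1 = (u, v) then t.2 else 0).Finite := by
      refine Set.Finite.subset (Set.finite_singleton t.1.2) ?_
      intro v hv
      simp only [Function.mem_support] at hv
      by_cases h : t.1 = (u, v)
      · simp [h]
      · simp [h] at hv
    have : (fun v => cpl (t :: L) u v)
        = fun v => (if t.1 = (u, v) then t.2 else 0) + cpl L u v := by
      funext v; exact cpl_cons t L u v
    rw [this, finsum_add_distrib h1 (cpl_row_support_finite L u), finsum_ite_pair, ih]
    simp

lemma cpl_col (L : List ((V × V) × ℝ)) (v : V) :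
    (∑ᶠ u, cpl L u v) = (L.map fun t => if t.1.2 = v then t.2 else 0).sum := by
  induction L with
  | nil => simp [cpl_nil]
  | cons t L ih =>
    have h1 : (Function.support fun u => if t.1 = (u, v) then t.2 else 0).Finite := by
      refine Set.Finite.subset (Set.finite_singleton t.1.1) ?_
      intro u hu
      simp only [Function.mem_support] at hu
      by_cases h : t.1 = (u, v)
      · simp [h]
      · simp [h] at hu
    have : (fun u => cpl (t :: L) u v)
        = fun u => (if t.1 = (u, v) then t.2 else 0) + cpl L u v := by
      funext u; exact cpl_cons t L u v
    rw [this, finsum_add_distrib h1 (cpl_col_support_finite L v), finsum_ite_pair', ih]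
    simp

lemma cpl_cost (G : SimpleGraph V) (L : List ((V × V) × ℝ)) :
    cost G (cpl L) = (L.map fun t => t.2 * (G.dist t.1.1 t.1.2 : ℝ)).sum := by
  induction L with
  | nil =>
    have : (fun p : V × V => cpl ([] : List ((V × V) × ℝ)) p.1 p.2 * (G.dist p.1 p.2 : ℝ))
        = fun _ => 0 := by funext p; simp [cpl_nil]
    simp [cost, this]
  | cons t L ih =>
    have h1 : (Function.support fun p : V × V =>
        (if t.1 = (p.1, p.2) then t.2 else 0) * (G.dist p.1 p.2 : ℝ)).Finite := by
      refine Set.Finite.subset (Set.finite_singleton t.1) ?_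
      intro p hp
      simp only [Function.mem_support] at hp
      by_cases h : t.1 = (p.1, p.2)
      · simp [h]
      · simp [h] at hp
    have h2 : (Function.support fun p : V × V =>
        cpl L p.1 p.2 * (G.dist p.1 p.2 : ℝ)).Finite := by
      refine Set.Finite.subset (cpl_support_finite L) ?_
      intro p hp
      simp only [Function.mem_support] at hp ⊢
      exact fun hc => hp (by simp [hc])
    have heq : (fun p : V × V => cpl (t :: L) p.1 p.2 * (G.dist p.1 p.2 : ℝ))
        = fun p : V × V => (if t.1 = (p.1, p.2) then t.2 else 0) * (G.dist p.1 p.2 : ℝ)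
          + cpl L p.1 p.2 * (G.dist p.1 p.2 : ℝ) := by
      funext p; rw [cpl_cons]; ring
    rw [cost, heq, finsum_add_distrib h1 h2]
    have h3 : (∑ᶠ p : V × V, (if t.1 = (p.1, p.2) then t.2 else 0) * (G.dist p.1 p.2 : ℝ))
        = t.2 * (G.dist t.1.1 t.1.2 : ℝ) := by
      rw [finsum_eq_single _ t.1 (fun p hp => by
        have : t.1 ≠ (p.1, p.2) := by simpa using hp.symm
        simp [this])]
      simp
    rw [h3, ← cost, ih]
    simp

lemma cpl_nonneg (L : List ((V × V) × ℝ)) (h : ∀ t ∈ L, 0 ≤ t.2) (u v : V) :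
    0 ≤ cpl L u v := by
  induction L with
  | nil => simp [cpl_nil]
  | cons t L ih =>
    rw [cpl_cons]
    have := h t (by simp)
    have h2 := ih (fun t' ht' => h t' (by simp [ht']))
    by_cases hh : t.1 = (u, v) <;> simp [hh] <;> linarith


variable {G : SimpleGraph V}

lemma cost_nonneg_s18 {μ₁ μ₂ : V → ℝ} {A : V → V → ℝ} (h : IsCoupling μ₁ μ₂ A) :
    0 ≤ cost G A :=
  finsum_nonneg fun p => mul_nonneg (h.1 p.1 p.2) (Nat.cast_nonneg _)

lemma W_le {μ₁ μ₂ : V → ℝ} {A : V → V → ℝ} (h : IsCoupling μ₁ μ₂ A) :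
    W G μ₁ μ₂ ≤ cost G A := by
  refine csInf_le ⟨0, ?_⟩ ⟨A, h, rfl⟩
  rintro c ⟨A', hA', rfl⟩
  exact cost_nonneg_s18 hA'

/-- contradiction from eventual positive curvature -/
lemma no_pos_curv {x y : V} (hk : HasRicci G x y 0) (c : ℝ) (hc : 0 < c)
    (h : ∀ α : ℝ, 1/2 < α → α < 1 → c * (1 - α) ≤ kIdle G α x y) : False := by
  have hev : ∀ᶠ α in nhdsWithin (1:ℝ) (Set.Iio 1),
      c ≤ kIdle G α x y / (1 - α) := by
    filter_upwards [Ioo_mem_nhdsLT_of_mem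
      (show (1:ℝ) ∈ Set.Ioc (1/2) 1 by norm_num)] with α hα
    have h1 : 0 < 1 - α := by linarith [hα.2]
    rw [le_div_iff₀ h1]
    exact h α hα.1 hα.2
  have := ge_of_tendsto hk hev
  linarith

lemma finsum_swap {A : V → V → ℝ}
    (h : (Function.support fun p : V × V => A p.1 p.2).Finite) :
    (∑ᶠ u, ∑ᶠ v, A u v) = ∑ᶠ v, ∑ᶠ u, A u v := by
  classical
  set S := h.toFinset with hS
  set Sx := S.image Prod.fst with hSx
  set Sy := S.image Prod.snd with hSy
  have hrow : ∀ u, (∑ᶠ v, A u v) = ∑ v ∈ Sy, A u v := by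
    intro u
    refine finsum_eq_sum_of_support_subset _ ?_
    intro v hv
    exact Finset.mem_image.2 ⟨(u, v), h.mem_toFinset.2 hv, rfl⟩
  have hcol : ∀ v, (∑ᶠ u, A u v) = ∑ u ∈ Sx, A u v := by
    intro v
    refine finsum_eq_sum_of_support_subset _ ?_
    intro u hu
    exact Finset.mem_image.2 ⟨(u, v), h.mem_toFinset.2 hu, rfl⟩
  calc (∑ᶠ u, ∑ᶠ v, A u v) = ∑ᶠ u, ∑ v ∈ Sy, A u v := by
        exact finsum_congr hrow
    _ = ∑ u ∈ Sx, ∑ v ∈ Sy, A u v := by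
        refine finsum_eq_sum_of_support_subset _ ?_
        intro u hu
        simp only [Function.mem_support] at hu
        by_contra hc
        refine hu (Finset.sum_eq_zero fun v _ => ?_)
        by_contra hA0
        exact hc (Finset.mem_image.2 ⟨(u, v), h.mem_toFinset.2 hA0, rfl⟩)
    _ = ∑ v ∈ Sy, ∑ u ∈ Sx, A u v := Finset.sum_comm
    _ = ∑ᶠ v, ∑ u ∈ Sx, A u v := by
        symm
        refine finsum_eq_sum_of_support_subset _ ?_
        intro v hv
        simp only [Function.mem_support] at hv
        by_contra hc
        refine hv (Finset.sum_eq_zero fun u _ => ?_)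
        by_contra hA0
        exact hc (Finset.mem_image.2 ⟨(u, v), h.mem_toFinset.2 hA0, rfl⟩)
    _ = ∑ᶠ v, ∑ᶠ u, A u v := finsum_congr fun v => (hcol v).symm

lemma coupling_mass_eq {μ₁ μ₂ : V → ℝ} {A : V → V → ℝ} (h : IsCoupling μ₁ μ₂ A) :
    (∑ᶠ u, μ₁ u) = ∑ᶠ v, μ₂ v := by
  obtain ⟨_, hfin, hrow, hcol⟩ := h
  calc (∑ᶠ u, μ₁ u) = ∑ᶠ u, ∑ᶠ v, A u v := finsum_congr fun u => (hrow u).symm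
    _ = ∑ᶠ v, ∑ᶠ u, A u v := finsum_swap hfin
    _ = ∑ᶠ v, μ₂ v := finsum_congr hcol

lemma neighborSet_finite_of_deg (x : V) (n : ℕ) (hn : n ≠ 0) (hd : deg G x = n) :
    (G.neighborSet x).Finite := by
  by_contra h
  rw [deg, Set.Infinite.ncard h] at hd
  exact hn hd.symm

lemma mu_total_four (α : ℝ) (x : V) (hd : deg G x = 4) : (∑ᶠ v, mu G α x v) = 1 := by
  classical
  have hF : (G.neighborSet x).Finite := neighborSet_finite_of_deg x 4 (by norm_num) hd
  have hxs : x ∉ hF.toFinset := by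
    simp [Set.Finite.mem_toFinset]
  have hsupp : (Function.support (mu G α x)) ⊆ ↑(insert x hF.toFinset) := by
    intro v hv
    simp only [Function.mem_support, mu] at hv
    by_cases h1 : v = x
    · simp [h1]
    · rw [if_neg h1] at hv
      by_cases h2 : G.Adj x v
      · simp [Set.Finite.mem_toFinset, h2]
      · simp [h2] at hv
  rw [finsum_eq_sum_of_support_subset _ hsupp, Finset.sum_insert hxs]
  have h1 : mu G α x x = α := by simp [mu]
  have h2 : ∀ v ∈ hF.toFinset, mu G α x v = (1 - α) / 4 := by
    intro v hv
    rw [Set.Finite.mem_toFinset] at hv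
    have hv' : G.Adj x v := hv
    have hne : v ≠ x := (G.ne_of_adj hv').symm
    rw [mu, if_neg hne, if_pos hv', hd]
    norm_num
  rw [h1, Finset.sum_congr rfl h2]
  have hcard : hF.toFinset.card = 4 := by
    rw [← Set.ncard_eq_toFinset_card _ hF]
    exact hd
  rw [Finset.sum_const, hcard]
  push_cast
  ring

lemma mu_total_infinite (α : ℝ) (z : V) (hinf : (G.neighborSet z).Infinite) :
    (∑ᶠ v, mu G α z v) = α := by
  have hd : deg G z = 0 := hinf.ncard
  have : mu G α z = fun v => if v = z then α else 0 := by
    funext v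
    rw [mu, hd]
    by_cases h : v = z
    · simp [h]
    · simp only [if_neg h]
      by_cases h2 : G.Adj z v <;> simp [h2]
  rw [this, finsum_eq_single _ z (fun v hv => if_neg hv)]
  simp

/-- If the far endpoint has infinitely many neighbors, there is no coupling and
the graph cannot be Ricci flat at the edge. -/
lemma no_infinite_deg {y z : V} (hk : HasRicci G y z 0) (hdy : deg G y = 4)
    (hinf : (G.neighborSet z).Infinite) : False := by
  refine no_pos_curv hk 2 (by norm_num) ?_
  intro α hα1 hα2
  have hempty : {c : ℝ | ∃ A : V → V → ℝ,
      IsCoupling (mu G α y) (mu G α z) A ∧ c = cost G A} = ∅ := by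
    ext c
    simp only [Set.mem_setOf_eq, Set.mem_empty_iff_false, iff_false]
    rintro ⟨A, hA, rfl⟩
    have := coupling_mass_eq hA
    rw [mu_total_four α y hdy, mu_total_infinite α z hinf] at this
    linarith
  have : kIdle G α y z = 1 := by
    rw [kIdle, W, hempty, Real.sInf_empty]
    ring
  rw [this]
  linarith


lemma dist_adj {u v : V} (h : G.Adj u v) : (G.dist u v : ℝ) = 1 := by
  rw [SimpleGraph.dist_eq_one_iff_adj.2 h]
  norm_num

lemma dist_le_two (hG : G.Connected) {a b c : V} (h1 : G.Adj a b) (h2 : G.Adj b c) :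
    (G.dist a c : ℝ) ≤ 2 := by
  have := hG.dist_triangle (u := a) (v := b) (w := c)
  have e1 := SimpleGraph.dist_eq_one_iff_adj.2 h1
  have e2 := SimpleGraph.dist_eq_one_iff_adj.2 h2
  have : G.dist a c ≤ 2 := by omega
  exact_mod_cast Nat.cast_le.2 this

lemma dist_le_three (hG : G.Connected) {a b c d : V} (h1 : G.Adj a b) (h2 : G.Adj b c)
    (h3 : G.Adj c d) : (G.dist a d : ℝ) ≤ 3 := by
  have t1 := hG.dist_triangle (u := a) (v := c) (w := d)
  have t2 := hG.dist_triangle (u := a) (v := b) (w := c)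
  have e1 := SimpleGraph.dist_eq_one_iff_adj.2 h1
  have e2 := SimpleGraph.dist_eq_one_iff_adj.2 h2
  have e3 := SimpleGraph.dist_eq_one_iff_adj.2 h3
  have : G.dist a d ≤ 3 := by omega
  exact_mod_cast Nat.cast_le.2 this

/-- From a 4-set containing three distinct elements, extract the fourth. -/
lemma extract_fourth {s : Set V} (hs : s.ncard = 4) {a b c : V}
    (ha : a ∈ s) (hb : b ∈ s) (hc : c ∈ s)
    (hab : a ≠ b) (hac : a ≠ c) (hbc : b ≠ c) :
    ∃ d : V, d ≠ a ∧ d ≠ b ∧ d ≠ c ∧ s = {a, b, c, d} := by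
  have hfin : s.Finite := by
    by_contra h
    rw [Set.Infinite.ncard h] at hs
    norm_num at hs
  have hsub : ({a, b, c} : Set V) ⊆ s := by
    intro u hu
    rcases hu with h | h | h
    · exact h ▸ ha
    · exact h ▸ hb
    · exact h ▸ hc
  have hc3 : ({a, b, c} : Set V).ncard = 3 := by
    rw [Set.ncard_insert_of_notMem (by simp [hab, hac]) (Set.toFinite _),
      Set.ncard_pair hbc]
  have hd : (s \ {a, b, c}).ncard = 1 := by
    rw [Set.ncard_diff hsub (Set.toFinite _), hs, hc3]
  obtain ⟨d, hdeq⟩ := Set.ncard_eq_one.1 hd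
  have hdmem : d ∈ s \ ({a, b, c} : Set V) := by rw [hdeq]; exact rfl
  refine ⟨d, ?_, ?_, ?_, ?_⟩
  · intro h; exact hdmem.2 (by simp [h])
  · intro h; exact hdmem.2 (by simp [h])
  · intro h; exact hdmem.2 (by simp [h])
  · have : s = {a, b, c} ∪ (s \ {a, b, c}) := by
      rw [Set.union_diff_cancel hsub]
    rw [this, hdeq]
    ext u
    simp only [Set.mem_union, Set.mem_insert_iff, Set.mem_singleton_iff]
    tauto

/-- From a set with three distinct elements and ncard ≤ small, equality. -/
lemma eq_three_of_ncard {s : Set V} (hfin : s.Finite) (hs : s.ncard = 3) {a b c : V}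
    (ha : a ∈ s) (hb : b ∈ s) (hc : c ∈ s)
    (hab : a ≠ b) (hac : a ≠ c) (hbc : b ≠ c) : s = {a, b, c} := by
  symm
  apply Set.eq_of_subset_of_ncard_le
  · intro u hu
    rcases hu with h | h | h
    · exact h ▸ ha
    · exact h ▸ hb
    · exact h ▸ hc
  · rw [hs, Set.ncard_insert_of_notMem (by simp [hab, hac]) (Set.toFinite _),
      Set.ncard_pair hbc]
  · exact hfin


lemma mu_self (α : ℝ) (x : V) : mu G α x x = α := by simp [mu]

lemma mu_adj (α : ℝ) {x v : V} (h : G.Adj x v) :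
    mu G α x v = (1 - α) / (deg G x : ℝ) := by
  rw [mu, if_neg (G.ne_of_adj h).symm, if_pos h]

lemma mu_nadj (α : ℝ) {x v : V} (h1 : v ≠ x) (h2 : ¬ G.Adj x v) : mu G α x v = 0 := by
  rw [mu, if_neg h1, if_neg h2]

lemma kIdle_ge_of_list (α c : ℝ) (x y : V) (L : List ((V × V) × ℝ))
    (hw : ∀ t ∈ L, 0 ≤ t.2)
    (h₁ : ∀ u, (L.map fun t => if t.1.1 = u then t.2 else 0).sum = mu G α x u)
    (h₂ : ∀ v, (L.map fun t => if t.1.2 = v then t.2 else 0).sum = mu G α y v)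
    (hcost : (L.map fun t => t.2 * (G.dist t.1.1 t.1.2 : ℝ)).sum ≤ 1 - c * (1 - α)) :
    c * (1 - α) ≤ kIdle G α x y := by
  have hA : IsCoupling (mu G α x) (mu G α y) (cpl L) :=
    ⟨cpl_nonneg L hw, cpl_support_finite L,
      fun u => (cpl_row L u).trans (h₁ u), fun v => (cpl_col L v).trans (h₂ v)⟩
  have hle := W_le (G := G) hA
  rw [cpl_cost] at hle
  rw [kIdle]
  linarith

/-- Main combinatorial lemma: an edge `(y,z)` with `deg y = 4` and two distinct
common neighbors is impossible in a Ricci-flat graph of max degree ≤ 4. -/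
lemma two_common_contra (hG : G.Connected) (hmax : ∀ v : V, deg G v ≤ 4)
    (hflat : RicciFlat G) {y z p q : V} (hyz : G.Adj y z) (hdy : deg G y = 4)
    (hyp : G.Adj y p) (hzp : G.Adj z p) (hyq : G.Adj y q) (hzq : G.Adj z q)
    (hpq : p ≠ q) : False := by
  have hk := hflat y z hyz
  have hzy : z ≠ y := (G.ne_of_adj hyz).symm
  have hyz' : y ≠ z := G.ne_of_adj hyz
  have hpy : p ≠ y := (G.ne_of_adj hyp).symm
  have hqy : q ≠ y := (G.ne_of_adj hyq).symm
  have hpz : p ≠ z := (G.ne_of_adj hzp).symm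
  have hqz : q ≠ z := (G.ne_of_adj hzq).symm
  -- fourth neighbor of y
  obtain ⟨d, hdz, hdp, hdq, hNy⟩ := extract_fourth (s := G.neighborSet y) hdy
    hyz hyp hyq (Ne.symm hpz) (Ne.symm hqz) hpq
  have hyd : G.Adj y d := by
    have : d ∈ G.neighborSet y := by rw [hNy]; simp
    exact this
  have hdny : d ≠ y := (G.ne_of_adj hyd).symm
  -- the neighborhood of z
  by_cases hfin : (G.neighborSet z).Finite
  case neg => exact no_infinite_deg hk hdy hfin
  have hsub : ({y, p, q} : Set V) ⊆ G.neighborSet z := by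
    intro u hu
    rcases hu with h | h | h
    · exact h ▸ hyz.symm
    · exact h ▸ hzp
    · exact h ▸ hzq
  have h3le : 3 ≤ deg G z := by
    have h3 : ({y, p, q} : Set V).ncard = 3 := by
      rw [Set.ncard_insert_of_notMem (by simp [hpy.symm, hqy.symm]) (Set.toFinite _),
        Set.ncard_pair (fun h => hpq h)]
    calc 3 = ({y, p, q} : Set V).ncard := h3.symm
      _ ≤ (G.neighborSet z).ncard := Set.ncard_le_ncard hsub hfin
  have h4ge := hmax z
  interval_cases hdegz : deg G z
  · -- deg z = 3
    have hNz : G.neighborSet z = {y, p, q} :=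
      eq_three_of_ncard hfin hdegz hyz.symm hzp hzq hpy.symm hqy.symm hpq
    refine no_pos_curv hk (1/2) (by norm_num) ?_
    intro α hα1 hα2
    set m : ℝ := (1 - α) / 4 with hm
    set m3 : ℝ := (1 - α) / 3 with hm3
    set e : ℝ := m3 - m with he
    have hmpos : 0 ≤ m := by rw [hm]; linarith
    have hm3pos : 0 ≤ m3 := by rw [hm3]; linarith
    have hepos : 0 ≤ e := by rw [he, hm3, hm]; linarith
    have hαm3 : 0 ≤ α - m3 := by rw [hm3]; linarith
    refine kIdle_ge_of_list α (1/2) y z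
      [((y,y),m3),((y,z),α-m3),((z,z),m),((p,p),m),((q,q),m),
       ((d,z),e),((d,p),e),((d,q),e)] ?_ ?_ ?_ ?_
    · intro t ht
      simp only [List.mem_cons, List.not_mem_nil, or_false] at ht
      rcases ht with rfl|rfl|rfl|rfl|rfl|rfl|rfl|rfl <;> simpa using by linarith
    · -- rows: marginal is mu G α y
      intro u
      simp only [List.map_cons, List.map_nil, List.sum_cons, List.sum_nil, add_zero]
      by_cases h1 : u = y
      · subst h1; simp [hzy, hpy, hqy, hdny, mu_self]
      by_cases h2 : u = z
      · subst h2
        rw [mu_adj α hyz, hdy]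
        simp [hyz', hpz, hqz, hdz, hm]
        try norm_num
      by_cases h3 : u = p
      · subst h3
        rw [mu_adj α hyp, hdy]
        simp [Ne.symm hpy, Ne.symm hpz, hpq.symm, hdp, hm]
        try norm_num
      by_cases h4 : u = q
      · subst h4
        rw [mu_adj α hyq, hdy]
        simp [Ne.symm hqy, Ne.symm hqz, hpq, hdq, hm]
        try norm_num
      by_cases h5 : u = d
      · subst h5
        rw [mu_adj α hyd, hdy]
        simp [Ne.symm hdny, Ne.symm hdz, Ne.symm hdp, Ne.symm hdq, hm, he, hm3]
        try ring
      · rw [mu_nadj α h1 (fun hadj => by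
          have : u ∈ G.neighborSet y := hadj
          rw [hNy] at this
          rcases this with h|h|h|h <;> [exact h2 h; exact h3 h; exact h4 h; exact h5 h])]
        simp [Ne.symm h1, Ne.symm h2, Ne.symm h3, Ne.symm h4, Ne.symm h5]
    · -- cols: marginal is mu G α z
      intro v
      simp only [List.map_cons, List.map_nil, List.sum_cons, List.sum_nil, add_zero]
      by_cases h1 : v = z
      · subst h1; rw [mu_self]
        simp [hyz', hpz, hqz]
        try ring
      by_cases h2 : v = y
      · subst h2
        rw [mu_adj α hyz.symm, hdegz]
        simp [hzy, hpy, hqy, hm3]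
        try norm_num
      by_cases h3 : v = p
      · subst h3
        rw [mu_adj α hzp, hdegz]
        simp [Ne.symm hpy, Ne.symm hpz, hpq.symm, hm, he, hm3]
        try ring_nf
        try norm_num
      by_cases h4 : v = q
      · subst h4
        rw [mu_adj α hzq, hdegz]
        simp [Ne.symm hqy, Ne.symm hqz, hpq, hm, he, hm3]
        try ring_nf
        try norm_num
      · rw [mu_nadj α h1 (fun hadj => by
          have : v ∈ G.neighborSet z := hadj
          rw [hNz] at this
          rcases this with h|h|h <;> [exact h2 h; exact h3 h; exact h4 h])]
        simp [Ne.symm h1, Ne.symm h2, Ne.symm h3, Ne.symm h4]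
    · -- cost
      simp only [List.map_cons, List.map_nil, List.sum_cons, List.sum_nil, add_zero]
      rw [SimpleGraph.dist_self, SimpleGraph.dist_self, SimpleGraph.dist_self,
        SimpleGraph.dist_self, dist_adj hyz]
      have hd1 := dist_le_two hG hyd.symm hyz
      have hd2 := dist_le_two hG hyd.symm hyp
      have hd3 := dist_le_two hG hyd.symm hyq
      have b1 := mul_le_mul_of_nonneg_left hd1 hepos
      have b2 := mul_le_mul_of_nonneg_left hd2 hepos
      have b3 := mul_le_mul_of_nonneg_left hd3 hepos
      rw [hm3] at *
      nlinarith [hepos, hαm3]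
  · -- deg z = 4
    obtain ⟨r, hry, hrp, hrq, hNz⟩ := extract_fourth (s := G.neighborSet z) hdegz
      hyz.symm hzp hzq hpy.symm hqy.symm hpq
    have hzr : G.Adj z r := by
      have : r ∈ G.neighborSet z := by rw [hNz]; simp
      exact this
    have hrz : r ≠ z := (G.ne_of_adj hzr).symm
    refine no_pos_curv hk (1/2) (by norm_num) ?_
    intro α hα1 hα2
    set m : ℝ := (1 - α) / 4 with hm
    have hmpos : 0 ≤ m := by rw [hm]; linarith
    have hαm : 0 ≤ α - m := by rw [hm]; linarith
    refine kIdle_ge_of_list α (1/2) y z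
      [((y,y),m),((y,z),α-m),((z,z),m),((p,p),m),((q,q),m),((d,r),m)] ?_ ?_ ?_ ?_
    · intro t ht
      simp only [List.mem_cons, List.not_mem_nil, or_false] at ht
      rcases ht with rfl|rfl|rfl|rfl|rfl|rfl <;> simpa using by linarith
    · intro u
      simp only [List.map_cons, List.map_nil, List.sum_cons, List.sum_nil, add_zero]
      by_cases h1 : u = y
      · subst h1; simp [hzy, hpy, hqy, hdny, mu_self]
      by_cases h2 : u = z
      · subst h2
        rw [mu_adj α hyz, hdy]
        simp [hyz', hpz, hqz, hdz, hm]
        try norm_num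
      by_cases h3 : u = p
      · subst h3
        rw [mu_adj α hyp, hdy]
        simp [Ne.symm hpy, Ne.symm hpz, hpq.symm, hdp, hm]
        try norm_num
      by_cases h4 : u = q
      · subst h4
        rw [mu_adj α hyq, hdy]
        simp [Ne.symm hqy, Ne.symm hqz, hpq, hdq, hm]
        try norm_num
      by_cases h5 : u = d
      · subst h5
        rw [mu_adj α hyd, hdy]
        simp [Ne.symm hdny, Ne.symm hdz, Ne.symm hdp, Ne.symm hdq, hm]
        try norm_num
      · rw [mu_nadj α h1 (fun hadj => by
          have : u ∈ G.neighborSet y := hadj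
          rw [hNy] at this
          rcases this with h|h|h|h <;> [exact h2 h; exact h3 h; exact h4 h; exact h5 h])]
        simp [Ne.symm h1, Ne.symm h2, Ne.symm h3, Ne.symm h4, Ne.symm h5]
    · intro v
      simp only [List.map_cons, List.map_nil, List.sum_cons, List.sum_nil, add_zero]
      by_cases h1 : v = z
      · subst h1; rw [mu_self]
        simp [hyz', hpz, hqz, hrz]
        try ring
      by_cases h2 : v = y
      · subst h2
        rw [mu_adj α hyz.symm, hdegz]
        simp [hzy, hpy, hqy, hry, hm]
        try norm_num
      by_cases h3 : v = p
      · subst h3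
        rw [mu_adj α hzp, hdegz]
        simp [Ne.symm hpy, Ne.symm hpz, hpq.symm, hrp, hm]
        try norm_num
      by_cases h4 : v = q
      · subst h4
        rw [mu_adj α hzq, hdegz]
        simp [Ne.symm hqy, Ne.symm hqz, hpq, hrq, hm]
        try norm_num
      by_cases h5 : v = r
      · subst h5
        rw [mu_adj α hzr, hdegz]
        simp [Ne.symm hry, Ne.symm hrz, Ne.symm hrp, Ne.symm hrq, hm]
        try norm_num
      · rw [mu_nadj α h1 (fun hadj => by
          have : v ∈ G.neighborSet z := hadj
          rw [hNz] at this
          rcases this with h|h|h|h <;> [exact h2 h; exact h3 h; exact h4 h; exact h5 h])]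
        simp [Ne.symm h1, Ne.symm h2, Ne.symm h3, Ne.symm h4, Ne.symm h5]
    · simp only [List.map_cons, List.map_nil, List.sum_cons, List.sum_nil, add_zero]
      rw [SimpleGraph.dist_self, SimpleGraph.dist_self, SimpleGraph.dist_self,
        SimpleGraph.dist_self, dist_adj hyz]
      have hd1 := dist_le_three hG hyd.symm hyz hzr
      have b1 := mul_le_mul_of_nonneg_left hd1 hmpos
      rw [hm] at *
      nlinarith [hmpos, hαm]


open SimpleGraph

lemma walk4_decomp {x : V} (p : G.Walk x x) (hlen : p.length = 4) :
    ∃ (v1 v2 v3 : V), G.Adj x v1 ∧ G.Adj v1 v2 ∧ G.Adj v2 v3 ∧ G.Adj v3 x ∧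
      p.support = [x, v1, v2, v3, x] ∧
      p.edges = [s(x,v1), s(v1,v2), s(v2,v3), s(v3,x)] := by
  cases p with
  | nil => simp at hlen
  | cons h1 p1 => cases p1 with
    | nil => simp at hlen
    | cons h2 p2 => cases p2 with
      | nil => simp at hlen
      | cons h3 p3 => cases p3 with
        | nil => simp at hlen
        | cons h4 p4 => cases p4 with
          | cons h5 p5 => simp [SimpleGraph.Walk.length_cons] at hlen
          | nil => exact ⟨_, _, _, h1, h2, h3, h4, by simp, by simp⟩

lemma cycle4_extract {x y : V} (hxy : G.Adj x y) (h : EdgeInCycle G 4 x y) :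
    ∃ u v : V, G.Adj y u ∧ G.Adj u v ∧ G.Adj v x ∧
      u ≠ x ∧ u ≠ y ∧ v ≠ x ∧ v ≠ y ∧ u ≠ v := by
  obtain ⟨u0, w, hcyc, hlen, he⟩ := h
  have hx : x ∈ w.support := w.fst_mem_support_of_mem_edges he
  set p := w.rotate x hx with hp
  have hcyc' : p.IsCycle := hcyc.rotate hx
  have he' : s(x, y) ∈ p.edges := (w.rotate_edges x hx).mem_iff.2 he
  have hlen' : p.length = 4 := by
    have := (w.rotate_edges x hx).perm.length_eq
    rw [SimpleGraph.Walk.length_edges, SimpleGraph.Walk.length_edges] at this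
    rw [this]
    exact hlen
  obtain ⟨v1, v2, v3, h1, h2, h3, h4, hsupp, hedges⟩ := walk4_decomp p hlen'
  have hnodup := hcyc'.support_nodup
  rw [hsupp] at hnodup
  simp only [List.tail_cons, List.nodup_cons, List.mem_cons,
    List.not_mem_nil, or_false, List.mem_singleton, List.nodup_nil] at hnodup
  push_neg at hnodup
  obtain ⟨⟨h12, h13, h1x⟩, ⟨h23, h2x⟩, h3x, -⟩ := hnodup
  rw [hedges] at he'
  simp only [List.mem_cons, List.not_mem_nil, or_false] at he'
  have hyx : y ≠ x := (G.ne_of_adj hxy).symm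
  rcases he' with h0 | h0 | h0 | h0
  · rw [Sym2.eq_iff] at h0
    rcases h0 with ⟨-, rfl⟩ | ⟨hh1, hh2⟩
    · exact ⟨v2, v3, h2, h3, h4, h2x, fun hh => h12 hh.symm,
        h3x, fun hh => h13 hh.symm, h23⟩
    · exact absurd hh2 hyx
  · rw [Sym2.eq_iff] at h0
    rcases h0 with ⟨hh1, hh2⟩ | ⟨hh1, hh2⟩
    · exact absurd hh1.symm h1x
    · exact absurd hh1.symm h2x
  · rw [Sym2.eq_iff] at h0
    rcases h0 with ⟨hh1, hh2⟩ | ⟨hh1, hh2⟩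
    · exact absurd hh1.symm h2x
    · exact absurd hh1.symm h3x
  · rw [Sym2.eq_iff] at h0
    rcases h0 with ⟨hh1, hh2⟩ | ⟨hh1, hh2⟩
    · exact absurd hh2 hyx
    · -- y = v3
      subst hh2
      exact ⟨v2, v1, h3.symm, h2.symm, h1.symm, h2x, h23,
        h1x, h13, fun hh => h12 hh.symm⟩


theorem ricciFlat_deg44_triangle_unique' (G : SimpleGraph V) (hG : G.Connected)
    (hmax : ∀ v : V, deg G v ≤ 4) (hflat : RicciFlat G)
    (x y z : V) (hxy : G.Adj x y) (hdx : deg G x = 4) (hdy : deg G y = 4)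
    (hxz : G.Adj x z) (hyz : G.Adj y z) :
    (∀ z' : V, G.Adj x z' → G.Adj y z' → z' = z) ∧ ¬ EdgeInCycle G 4 x y := by
  have part1 : ∀ z' : V, G.Adj x z' → G.Adj y z' → z' = z := by
    intro z' h1 h2
    by_contra hne
    exact two_common_contra hG hmax hflat hxy hdx hxz hyz h1 h2 (Ne.symm hne)
  refine ⟨part1, ?_⟩
  intro hcyc
  obtain ⟨u, v, hyu, huv, hvx, hux, huy, hvnx, hvy, hunv⟩ := cycle4_extract hxy hcyc
  by_cases hu : u = z
  · -- edge (x,z) has common neighbors y and v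
    subst hu
    exact two_common_contra hG hmax hflat hxz hdx hxy hyz.symm hvx.symm huv
      (fun h => hvy h.symm)
  by_cases hv : v = z
  · -- edge (y,z) has common neighbors x and u
    subst hv
    exact two_common_contra hG hmax hflat hyz hdy hxy.symm hxz.symm hyu huv.symm
      (fun h => hux h.symm)
  -- main case: u, v ∉ {z}; build a cheap coupling on edge (x,y)
  have hxy' : x ≠ y := G.ne_of_adj hxy
  have hyx : y ≠ x := Ne.symm hxy'
  have hxz' : x ≠ z := G.ne_of_adj hxz
  have hzx : z ≠ x := Ne.symm hxz'
  have hyz' : y ≠ z := G.ne_of_adj hyz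
  have hzy : z ≠ y := Ne.symm hyz'
  -- a := v (neighbor of x), c := u (neighbor of y)
  obtain ⟨b, hby, hbz, hbv, hNx⟩ := extract_fourth (s := G.neighborSet x) hdx
    hxy hxz hvx.symm hyz' (Ne.symm hvy) (fun h => hv h.symm)
  have hxb : G.Adj x b := by
    have : b ∈ G.neighborSet x := by rw [hNx]; simp
    exact this
  have hbx : b ≠ x := (G.ne_of_adj hxb).symm
  obtain ⟨d, hdx', hdz, hdu, hNy⟩ := extract_fourth (s := G.neighborSet y) hdy
    hxy.symm hyz hyu hxz' hux.symm (fun h => hu h.symm)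
  have hyd : G.Adj y d := by
    have : d ∈ G.neighborSet y := by rw [hNy]; simp
    exact this
  have hdny : d ≠ y := (G.ne_of_adj hyd).symm
  -- cross distinctness using part1
  have hbd : b ≠ d := by
    intro h
    exact hbz (part1 b hxb (h ▸ hyd))
  have had : v ≠ d := by
    intro h
    exact hv (part1 v hvx.symm (h ▸ hyd))
  have hbu : b ≠ u := by
    intro h
    exact hbz (part1 b hxb (h ▸ hyu))
  have hvu : v ≠ u := Ne.symm hunv
  refine no_pos_curv (hflat x y hxy) (1/4) (by norm_num) ?_
  intro α hα1 hα2
  set m : ℝ := (1 - α) / 4 with hm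
  have hmpos : 0 ≤ m := by rw [hm]; linarith
  have hαm : 0 ≤ α - m := by rw [hm]; linarith
  refine kIdle_ge_of_list α (1/4) x y
    [((x,x),m),((x,y),α-m),((y,y),m),((z,z),m),((v,u),m),((b,d),m)] ?_ ?_ ?_ ?_
  · intro t ht
    simp only [List.mem_cons, List.not_mem_nil, or_false] at ht
    rcases ht with rfl|rfl|rfl|rfl|rfl|rfl <;> simpa using by linarith
  · -- rows: mu G α x
    intro w
    simp only [List.map_cons, List.map_nil, List.sum_cons, List.sum_nil, add_zero]
    by_cases h1 : w = x
    · subst h1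
      rw [mu_self]
      simp [hyx, hzx, hvnx, hbx]
      try ring
    by_cases h2 : w = y
    · subst h2
      rw [mu_adj α hxy, hdx]
      simp [hxy', hzy, hvy, hby, hm]
      try norm_num
    by_cases h3 : w = z
    · subst h3
      rw [mu_adj α hxz, hdx]
      simp [hxz', hyz', hv, hbz, hm]
      try norm_num
    by_cases h4 : w = v
    · subst h4
      rw [mu_adj α hvx.symm, hdx]
      simp [Ne.symm hvnx, Ne.symm hvy, Ne.symm hv, hbv, hm]
      try norm_num
    by_cases h5 : w = b
    · subst h5
      rw [mu_adj α hxb, hdx]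
      simp [Ne.symm hbx, Ne.symm hby, Ne.symm hbz, Ne.symm hbv, hm]
      try norm_num
    · rw [mu_nadj α h1 (fun hadj => by
        have : w ∈ G.neighborSet x := hadj
        rw [hNx] at this
        rcases this with h|h|h|h <;> [exact h2 h; exact h3 h; exact h4 h; exact h5 h])]
      simp [Ne.symm h1, Ne.symm h2, Ne.symm h3, Ne.symm h4, Ne.symm h5]
  · -- cols: mu G α y
    intro w
    simp only [List.map_cons, List.map_nil, List.sum_cons, List.sum_nil, add_zero]
    by_cases h1 : w = y
    · subst h1
      rw [mu_self]
      simp [hxy', hzy, huy, hdny]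
      try ring
    by_cases h2 : w = x
    · subst h2
      rw [mu_adj α hxy.symm, hdy]
      simp [hyx, hzx, hux, hdx', hm]
      try norm_num
    by_cases h3 : w = z
    · subst h3
      rw [mu_adj α hyz, hdy]
      simp [hxz', hyz', hu, hdz, hm]
      try norm_num
    by_cases h4 : w = u
    · subst h4
      rw [mu_adj α hyu, hdy]
      simp [Ne.symm hux, Ne.symm huy, Ne.symm hu, hdu, hm]
      try norm_num
    by_cases h5 : w = d
    · subst h5
      rw [mu_adj α hyd, hdy]
      simp [Ne.symm hdx', Ne.symm hdny, Ne.symm hdz, Ne.symm hdu, hm]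
      try norm_num
    · rw [mu_nadj α h1 (fun hadj => by
        have : w ∈ G.neighborSet y := hadj
        rw [hNy] at this
        rcases this with h|h|h|h <;> [exact h2 h; exact h3 h; exact h4 h; exact h5 h])]
      simp [Ne.symm h1, Ne.symm h2, Ne.symm h3, Ne.symm h4, Ne.symm h5]
  · -- cost
    simp only [List.map_cons, List.map_nil, List.sum_cons, List.sum_nil, add_zero]
    rw [SimpleGraph.dist_self, SimpleGraph.dist_self, SimpleGraph.dist_self,
      dist_adj hxy, dist_adj huv.symm]
    have hd1 := dist_le_three hG hxb.symm hxy hyd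
    have b1 := mul_le_mul_of_nonneg_left hd1 hmpos
    rw [hm] at *
    nlinarith [hmpos, hαm]


end RicciFlatPaper

namespace RicciFlatPaper

variable {V : Type*}

/-- in a Ricci-flat graph with max degree ≤ 4, an edge with both
endpoints of degree 4 contained in a triangle `x–y–z` is in no second triangle and
in no 4-cycle. -/
theorem ricciFlat_deg44_triangle_unique (G : SimpleGraph V) (hG : G.Connected)
    (hmax : ∀ v : V, deg G v ≤ 4) (hflat : RicciFlat G)
    (x y z : V) (hxy : G.Adj x y) (hdx : deg G x = 4) (hdy : deg G y = 4)
    (hxz : G.Adj x z) (hyz : G.Adj y z) :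
    (∀ z' : V, G.Adj x z' → G.Adj y z' → z' = z) ∧ ¬ EdgeInCycle G 4 x y := by
  exact ricciFlat_deg44_triangle_unique' G hG hmax hflat x y z hxy hdx hdy hxz hyz

end RicciFlatPaper
end
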